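/- Fix σ > 0 and let U = Xᵀε/n where ε ~ N_n(0, σ²I_n). Suppose that for every u ∈ R^p the functions V(·; β₀, u) and V(·; β̌, u) each have a unique minimizer (which holds when the columns of X are in general position). Let δ̂ = argmin_δ V(δ; β₀, U) and δ* = argmin_δ V(δ; β̌, U*), where U* has the same distribution as U. Assume the fixed vector β̌ satisfies (i) β̌_j = 0 for all j ∉ A₀ and (ii) η := sup_{j∈A₀}|β̌_j − β₀_j|/|β₀_j| < 1, and that inf_{j∈A₀}|β₀_j| > M₁/(r(1 − η)) for some M₁ > 0. Then the conditional law of δ* given {‖δ*‖_∞ < M₁} equals the conditional law of δ̂ given {‖δ̂‖_∞ < M₁}. -/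

import Mathlib

/-!
On the box `‖δ‖_∞ < M₁` the beta-min condition makes every coordinate of `β₀ + δ/r` and of
`β̌ + δ/r` carry the sign of `β₀` (or vanish with it), so `V(·; β₀, u)` and `V(·; β̌, u)` agree
there. Both are convex, so a minimizer of one lying in the open box is a local, hence global,
minimizer of the other; by uniqueness, on the event that either lies in the box, `δ*` and `δ̂` are
the same argmin map applied to `U*` and `U`. That map has a closed graph, hence is Borel, and
`U* ≍ U` gives the equality of the two conditional laws.
-/

open Matrix MeasureTheory ProbabilityTheory

/-- The localized Lasso criterion `V(δ; b, u)`, where `C = XᵀX/n`. -/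
noncomputable def Vfun {n p : ℕ} (X : Matrix (Fin n) (Fin p) ℝ) (w : Fin p → ℝ)
    (lam r : ℝ) (b u δ : Fin p → ℝ) : ℝ :=
  (n / (2 * r ^ 2)) * dotProduct δ (((n : ℝ)⁻¹ • (Xᵀ * X)).mulVec δ)
    - (n / r) * dotProduct δ u
    + n * lam * ∑ j, w j * (|b j + δ j / r| - |b j|)

open Set Topology

theorem Matrix.PosSemidef.convexOn_dotProduct_mulVec {ι : Type*} [Fintype ι]
    {A : Matrix ι ι ℝ} (hA : A.PosSemidef) : ConvexOn ℝ univ fun x => x ⬝ᵥ (A *ᵥ x) := by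
  refine ⟨convex_univ, fun x _ y _ a b ha hb hab => ?_⟩
  have hxy := hA.dotProduct_mulVec_nonneg (x - y)
  simp only [star_trivial, mulVec_add, mulVec_smul, mulVec_sub, dotProduct_add, add_dotProduct,
    dotProduct_smul, smul_dotProduct, dotProduct_sub, sub_dotProduct, smul_eq_mul] at hxy ⊢
  -- `a q(x) + b q(y) - q(a x + b y) = a b q(x - y)` when `a + b = 1`
  obtain rfl : b = 1 - a := by linarith
  nlinarith [mul_nonneg ha hb]

theorem abs_add_sub_abs_eq_of_abs_sub_add_abs_lt {a c t : ℝ} (h : |c - a| + |t| < |a|) :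
    |c + t| - |c| = |a + t| - |a| := by
  grind [abs_lt, abs_le]

theorem isOpen_setOf_forall_abs_lt {ι : Type*} [Finite ι] (M : ℝ) :
    IsOpen {x : ι → ℝ | ∀ j, |x j| < M} := by
  simp only [ofPred_forall]
  exact isOpen_iInter_of_finite fun j => isOpen_lt (by fun_prop) continuous_const

theorem IsMinOn.of_eqOn_of_convexOn {E : Type*} [AddCommGroup E] [TopologicalSpace E] [Module ℝ E]
    [IsTopologicalAddGroup E] [ContinuousSMul ℝ E] {f g : E → ℝ} {s : Set E} {x : E}
    (hf : IsMinOn f univ x) (hs : s ∈ 𝓝 x) (hfg : EqOn f g s) (hg : ConvexOn ℝ univ g) :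
    IsMinOn g univ x := by
  refine .of_isLocalMinOn_of_convexOn (mem_univ x) ?_ hg
  rw [IsLocalMinOn, IsMinFilter, nhdsWithin_univ]
  filter_upwards [hs] with y hy
  rw [← hfg hy, ← hfg (mem_of_mem_nhds hs)]
  exact hf (mem_univ y)

theorem isClosed_preimage_of_isClosed_graph {α β : Type*} [TopologicalSpace α] [TopologicalSpace β]
    {F : α → β} (hF : IsClosed {q : α × β | F q.1 = q.2}) {K : Set β} (hK : IsCompact K) :
    IsClosed (F ⁻¹' K) := by
  have : CompactSpace K := isCompact_iff_compactSpace.mp hK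
  have hgraph : IsClosed {q : α × K | F q.1 = q.2} :=
    hF.preimage (continuous_fst.prodMk (continuous_subtype_val.comp continuous_snd))
  convert isClosedMap_fst_of_compactSpace _ hgraph
  ext u
  refine ⟨fun hu => ⟨(u, ⟨F u, hu⟩), rfl, rfl⟩, ?_⟩
  rintro ⟨⟨v, k, hk⟩, hvk : F v = k, rfl⟩
  exact hvk ▸ hk

theorem measurable_of_isClosed_graph {α β : Type*} [TopologicalSpace α] [MeasurableSpace α]
    [OpensMeasurableSpace α] [TopologicalSpace β] [SigmaCompactSpace β] [MeasurableSpace β]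
    [BorelSpace β] {F : α → β} (hF : IsClosed {q : α × β | F q.1 = q.2}) : Measurable F := by
  refine measurable_of_isClosed fun s hs => ?_
  rw [← inter_univ s, ← iUnion_compactCovering, inter_iUnion, preimage_iUnion]
  exact .iUnion fun m => (isClosed_preimage_of_isClosed_graph hF
    ((isCompact_compactCovering β m).inter_left hs)).measurableSet

theorem measurable_of_isMinOn_iff {α β : Type*} [TopologicalSpace α] [MeasurableSpace α]
    [OpensMeasurableSpace α] [TopologicalSpace β] [SigmaCompactSpace β] [MeasurableSpace β]
    [BorelSpace β] {V : α → β → ℝ} (hV : Continuous (Function.uncurry V)) {F : α → β}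
    (hF : ∀ u y, IsMinOn (V u) univ y ↔ F u = y) : Measurable F := by
  refine measurable_of_isClosed_graph ?_
  simp only [← hF, isMinOn_univ_iff, ofPred_forall]
  exact isClosed_iInter fun y => isClosed_le hV (hV.comp (continuous_fst.prodMk continuous_const))

theorem convexOn_Vfun {n p : ℕ} (X : Matrix (Fin n) (Fin p) ℝ) {w : Fin p → ℝ}
    (hw : ∀ j, 0 ≤ w j) {lam : ℝ} (hlam : 0 ≤ lam) (r : ℝ) (b u : Fin p → ℝ) :
    ConvexOn ℝ univ (Vfun X w lam r b u) := by
  have hC : ((n : ℝ)⁻¹ • (Xᵀ * X)).PosSemidef := by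
    simpa using (posSemidef_conjTranspose_mul_self X).smul (inv_nonneg.mpr n.cast_nonneg)
  have hquad := hC.convexOn_dotProduct_mulVec.smul (by positivity : (0 : ℝ) ≤ n / (2 * r ^ 2))
  have hlin := (((n : ℝ) / r) • (dotProductBilin ℝ ℝ).flip u).concaveOn convex_univ
  have hpen : ConvexOn ℝ univ fun δ : Fin p → ℝ => ∑ j, w j * (|b j + δ j / r| - |b j|) := by
    have hterm (j : Fin p) :
        ConvexOn ℝ univ fun δ : Fin p → ℝ => w j * (|b j + δ j / r| - |b j|) := by
      have habs : ConvexOn ℝ univ fun δ : Fin p → ℝ => |b j + δ j / r| :=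
        ((convexOn_univ_norm.translate_right (b j)).comp_linearMap
          (r⁻¹ • LinearMap.proj j : (Fin p → ℝ) →ₗ[ℝ] ℝ)).congr fun δ _ => by
            simp [div_eq_inv_mul]
      exact (habs.sub (concaveOn_const _ convex_univ)).smul (hw j)
    simpa only [Finset.sum_fn] using Finset.sum_induction
      (fun j (δ : Fin p → ℝ) => w j * (|b j + δ j / r| - |b j|)) (ConvexOn ℝ univ)
      (fun _ _ => .add) (convexOn_const 0 convex_univ) fun j _ => hterm j
  exact (hquad.sub hlin).add (hpen.smul (by positivity))

theorem continuous_uncurry_Vfun {n p : ℕ} (X : Matrix (Fin n) (Fin p) ℝ) (w : Fin p → ℝ)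
    (lam r : ℝ) (b : Fin p → ℝ) : Continuous (Function.uncurry (Vfun X w lam r b)) := by
  simp only [Function.uncurry_def, Vfun, dotProduct, mulVec]
  fun_prop

theorem Vfun_eqOn_box {n p : ℕ} (X : Matrix (Fin n) (Fin p) ℝ) (w : Fin p → ℝ) (lam : ℝ)
    {r : ℝ} (hr : 0 < r) {β₀ βc : Fin p → ℝ} (hsupp : ∀ j, β₀ j = 0 → βc j = 0) {η : ℝ}
    (hη1 : η < 1) (hη : ∀ j, β₀ j ≠ 0 → |βc j - β₀ j| ≤ η * |β₀ j|) {M₁ : ℝ}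
    (hbetamin : ∀ j, β₀ j ≠ 0 → M₁ / (r * (1 - η)) < |β₀ j|) (u : Fin p → ℝ) :
    EqOn (Vfun X w lam r β₀ u) (Vfun X w lam r βc u) {δ | ∀ j, |δ j| < M₁} := by
  intro δ hδ
  have hterm (j : Fin p) : |β₀ j + δ j / r| - |β₀ j| = |βc j + δ j / r| - |βc j| := by
    by_cases hj : β₀ j = 0
    · simp [hj, hsupp j hj]
    have hstep : |δ j / r| < (1 - η) * |β₀ j| := by
      rw [abs_div, abs_of_pos hr, div_lt_iff₀ hr]
      have := (div_lt_iff₀ (by nlinarith)).mp (hbetamin j hj)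
      linarith [hδ j]
    exact (abs_add_sub_abs_eq_of_abs_sub_add_abs_lt (by linarith [hη j hj])).symm
  simp only [Vfun, hterm]

theorem eq_of_isMinOn_of_eqOn {E : Type*} [AddCommGroup E] [TopologicalSpace E] [Module ℝ E]
    [IsTopologicalAddGroup E] [ContinuousSMul ℝ E] {f g : E → ℝ} {s : Set E} {x y : E}
    (hs : IsOpen s) (hfg : EqOn f g s) (hf : ConvexOn ℝ univ f) (hg : ConvexOn ℝ univ g)
    (hfu : ∃! z, IsMinOn f univ z) (hgu : ∃! z, IsMinOn g univ z)
    (hx : IsMinOn f univ x) (hy : IsMinOn g univ y) (hmem : x ∈ s ∨ y ∈ s) : x = y := by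
  rcases hmem with hxs | hys
  · exact hgu.unique (hx.of_eqOn_of_convexOn (hs.mem_nhds hxs) hfg hg) hy
  · exact hfu.unique hx (hy.of_eqOn_of_convexOn (hs.mem_nhds hys) hfg.symm hf)

theorem conditional_law_eq_of_thresholded_general {n p : ℕ}
    (X : Matrix (Fin n) (Fin p) ℝ) (w : Fin p → ℝ) (hw : ∀ j, 0 < w j)
    (lam : ℝ) (hlam : 0 < lam) (r : ℝ) (hr : 0 < r)
    (β₀ βc : Fin p → ℝ)
    (hsupp : ∀ j, β₀ j = 0 → βc j = 0)
    (η : ℝ) (hη1 : η < 1)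
    (hη : ∀ j, β₀ j ≠ 0 → |βc j - β₀ j| ≤ η * |β₀ j|)
    (M₁ : ℝ)
    (hbetamin : ∀ j, β₀ j ≠ 0 → M₁ / (r * (1 - η)) < |β₀ j|)
    -- unique minimizers (columns of X in general position)
    (huniq : ∀ b u : Fin p → ℝ, ∃! δ : Fin p → ℝ,
      ∀ δ', Vfun X w lam r b u δ ≤ Vfun X w lam r b u δ')
    -- probability space carrying U and U*
    (Ω : Type*) [MeasurableSpace Ω] (Pr : Measure Ω)
    (U Ustar : Ω → Fin p → ℝ) (hU : Measurable U) (hUstar : Measurable Ustar)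
    (hsamelaw : Measure.map Ustar Pr = Measure.map U Pr)
    -- the two minimizers
    (δhat δstar : Ω → Fin p → ℝ)
    (hδhat : ∀ ω δ, Vfun X w lam r β₀ (U ω) (δhat ω) ≤ Vfun X w lam r β₀ (U ω) δ)
    (hδstar : ∀ ω δ, Vfun X w lam r βc (Ustar ω) (δstar ω) ≤ Vfun X w lam r βc (Ustar ω) δ) :
    ∀ B : Set (Fin p → ℝ), MeasurableSet B →
      (Pr ({ω | δstar ω ∈ B} ∩ {ω | ∀ j, |δstar ω j| < M₁})).toReal /
          (Pr {ω | ∀ j, |δstar ω j| < M₁}).toReal =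
      (Pr ({ω | δhat ω ∈ B} ∩ {ω | ∀ j, |δhat ω j| < M₁})).toReal /
          (Pr {ω | ∀ j, |δhat ω j| < M₁}).toReal := by
  intro B hB
  simp only [← isMinOn_univ_iff] at huniq hδhat hδstar
  set box : Set (Fin p → ℝ) := {δ | ∀ j, |δ j| < M₁}
  have hconv (b u : Fin p → ℝ) := convexOn_Vfun X (fun j => (hw j).le) hlam.le r b u
  let F u := (huniq β₀ u).choose
  have hF (u δ : Fin p → ℝ) : IsMinOn (Vfun X w lam r β₀ u) univ δ ↔ F u = δ :=
    (huniq β₀ u).choose_eq_iff.symm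
  have hFmeas : Measurable F := measurable_of_isMinOn_iff (continuous_uncurry_Vfun X w lam r β₀) hF
  have hhat : δhat = F ∘ U := funext fun ω => ((hF _ _).mp (hδhat ω)).symm
  have hstar (T) (hT : T ⊆ box) : δstar ⁻¹' T = Ustar ⁻¹' (F ⁻¹' T) := by
    have hagree (ω) (hω : F (Ustar ω) ∈ T ∨ δstar ω ∈ T) : F (Ustar ω) = δstar ω :=
      eq_of_isMinOn_of_eqOn (isOpen_setOf_forall_abs_lt M₁)
        (Vfun_eqOn_box X w lam hr hsupp hη1 hη hbetamin (Ustar ω)) (hconv _ _) (hconv _ _)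
        (huniq _ _) (huniq _ _) ((hF _ _).mpr rfl) (hδstar ω) (hω.imp (@hT _) (@hT _))
    ext ω
    exact ⟨fun h => by rwa [mem_preimage, mem_preimage, hagree ω (.inr h)],
      fun h => by rwa [mem_preimage, ← hagree ω (.inl h)]⟩
  have hlaw (T) (hTbox : T ⊆ box) (hT : MeasurableSet T) : Pr (δstar ⁻¹' T) = Pr (δhat ⁻¹' T) := by
    rw [hstar T hTbox, hhat, preimage_comp, ← Measure.map_apply hUstar (hFmeas hT), hsamelaw,
      Measure.map_apply hU (hFmeas hT)]
  have hbox : MeasurableSet box := (isOpen_setOf_forall_abs_lt M₁).measurableSet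
  change (Pr (δstar ⁻¹' (B ∩ box))).toReal / (Pr (δstar ⁻¹' box)).toReal =
    (Pr (δhat ⁻¹' (B ∩ box))).toReal / (Pr (δhat ⁻¹' box)).toReal
  rw [hlaw _ inter_subset_right (hB.inter hbox), hlaw _ subset_rfl hbox]

/-- With `δ̂ = argmin V(·; β₀, U)` and `δ* = argmin V(·; β̌, U*)`, where `U* ≍ U = Xᵀε/n`
and `ε ~ N(0, σ²I)`, under conditions (i), (ii) and the beta-min condition, the conditional
law of `δ*` given `{‖δ*‖_∞ < M₁}` equals the conditional law of `δ̂` given `{‖δ̂‖_∞ < M₁}`. -/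
theorem conditional_law_eq_of_thresholded {n p : ℕ}
    (X : Matrix (Fin n) (Fin p) ℝ) (w : Fin p → ℝ) (hw : ∀ j, 0 < w j)
    (lam : ℝ) (hlam : 0 < lam) (r : ℝ) (hr : 0 < r)
    (σ : ℝ) (hσ : 0 < σ)
    (β₀ βc : Fin p → ℝ)
    (hsupp : ∀ j, β₀ j = 0 → βc j = 0)
    (η : ℝ) (hη0 : 0 ≤ η) (hη1 : η < 1)
    (hη : ∀ j, β₀ j ≠ 0 → |βc j - β₀ j| ≤ η * |β₀ j|)
    (M₁ : ℝ) (hM₁ : 0 < M₁)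
    (hbetamin : ∀ j, β₀ j ≠ 0 → M₁ / (r * (1 - η)) < |β₀ j|)
    -- unique minimizers (columns of X in general position)
    (huniq : ∀ b u : Fin p → ℝ, ∃! δ : Fin p → ℝ,
      ∀ δ', Vfun X w lam r b u δ ≤ Vfun X w lam r b u δ')
    -- probability space carrying U and U*
    (Ω : Type*) [MeasurableSpace Ω] (Pr : Measure Ω) [IsProbabilityMeasure Pr]
    (U Ustar : Ω → Fin p → ℝ) (hU : Measurable U) (hUstar : Measurable Ustar)
    (hlawU : Measure.map U Pr =
      Measure.map (fun e : Fin n → ℝ => fun j => (n : ℝ)⁻¹ * Xᵀ.mulVec e j)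
        (Measure.pi fun _ : Fin n => gaussianReal 0 ⟨σ ^ 2, sq_nonneg σ⟩))
    (hsamelaw : Measure.map Ustar Pr = Measure.map U Pr)
    -- the two minimizers
    (δhat δstar : Ω → Fin p → ℝ)
    (hδhat : ∀ ω δ, Vfun X w lam r β₀ (U ω) (δhat ω) ≤ Vfun X w lam r β₀ (U ω) δ)
    (hδstar : ∀ ω δ, Vfun X w lam r βc (Ustar ω) (δstar ω) ≤ Vfun X w lam r βc (Ustar ω) δ) :
    ∀ B : Set (Fin p → ℝ), MeasurableSet B →
      (Pr ({ω | δstar ω ∈ B} ∩ {ω | ∀ j, |δstar ω j| < M₁})).toReal /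
          (Pr {ω | ∀ j, |δstar ω j| < M₁}).toReal =
      (Pr ({ω | δhat ω ∈ B} ∩ {ω | ∀ j, |δhat ω j| < M₁})).toReal /
          (Pr {ω | ∀ j, |δhat ω j| < M₁}).toReal :=
  conditional_law_eq_of_thresholded_general X w hw lam hlam r hr β₀ βc hsupp η hη1 hη M₁ hbetamin
    huniq Ω Pr U Ustar hU hUstar hsamelaw δhat δstar hδhat hδstar
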